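/- arXiv:2107.02055 — 6 statements merged into one kernel-verified Lean document; each statement's English description precedes it below -/
import Mathlib

section
/- For fixed z > 0, λ = e^{-z}, μ = λ(e^{iϑ} - 1), and w > 0 with K = w/z a positive integer, the identity ∑_{0 ≤ k ≤ K} μ^k (w - kz)^k / k! = (1/(2πi)) ∮_{|ζ|=R} (1 - e^{-(K+1)μzζ}/ζ^{K+1}) e^{μwζ} / (ζ - e^{-μzζ}) dζ holds for any R > 0 such that the function ζ ↦ ζ - e^{-μzζ} has no zeros on |ζ| = R. -/
/-!
Write `e = exp (-μ z ζ)`. Off the zeros of `ζ - e`, the kernel `(1 - e ^ (K+1) / ζ ^ (K+1)) / (ζ - e)`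
is the finite geometric sum `∑_{j ≤ K} e ^ j / ζ ^ (j+1)`, so on the circle the integrand equals
`∑_{j ≤ K} exp (μ (w - j z) ζ) / ζ ^ (j+1)`. By Cauchy's formula the `j`-th term integrates to `2πi`
times the `j`-th Taylor coefficient of `exp (μ (w - j z) ζ)` at `0`, namely `(μ (w - j z)) ^ j / j!`.
-/

open Complex Finset Real

theorem one_sub_div_pow_div_sub_eq_sum {𝕜 : Type*} [Field 𝕜] {x e : 𝕜} (hx : x ≠ 0)
    (hxe : x - e ≠ 0) (n : ℕ) :
    (1 - e ^ n / x ^ n) / (x - e) = ∑ j ∈ range n, e ^ j / x ^ (j + 1) := by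
  induction n with
  | zero => simp
  | succ n ih =>
    rw [sum_range_succ, ← ih]
    field_simp
    ring

theorem one_sub_cexp_div_pow_mul_cexp_div_eq_sum {a b ζ : ℂ} (hζ : ζ ≠ 0)
    (hden : ζ - cexp (-(b * ζ)) ≠ 0) (n : ℕ) :
    (1 - cexp (-(n * b * ζ)) / ζ ^ n) * cexp (a * ζ) / (ζ - cexp (-(b * ζ)))
      = ∑ j ∈ range n, cexp ((a - j * b) * ζ) / ζ ^ (j + 1) := by
  have hpow (j : ℕ) : cexp (-(j * b * ζ)) = cexp (-(b * ζ)) ^ j := by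
    rw [← Complex.exp_nat_mul]; ring_nf
  have hshift (j : ℕ) : cexp ((a - j * b) * ζ) = cexp (a * ζ) * cexp (-(b * ζ)) ^ j := by
    rw [← hpow, ← Complex.exp_add]; ring_nf
  simp only [hpow, hshift, mul_div_right_comm _ (cexp (a * ζ)),
    one_sub_div_pow_div_sub_eq_sum hζ hden, sum_mul]
  exact sum_congr rfl fun j _ => by ring

theorem circleIntegrable_cexp_mul_div_pow (a : ℂ) {R : ℝ} (hR : 0 < R) (n : ℕ) :
    CircleIntegrable (fun ζ => cexp (a * ζ) / ζ ^ n) 0 R := by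
  refine ContinuousOn.circleIntegrable hR.le (ContinuousOn.div (by fun_prop) (by fun_prop) ?_)
  intro ζ hζ
  exact pow_ne_zero _ (ne_zero_of_mem_sphere hR.ne' ⟨ζ, hζ⟩)

theorem circleIntegral_cexp_mul_div_pow (a : ℂ) {R : ℝ} (hR : 0 < R) (n : ℕ) :
    (∮ ζ in C(0, R), cexp (a * ζ) / ζ ^ (n + 1)) = 2 * π * I * a ^ n / n.factorial := by
  have hdiff : DifferentiableOn ℂ (fun ζ => cexp (a * ζ)) (Metric.closedBall 0 R) := by
    fun_prop
  have hcauchy := hdiff.circleIntegral_one_div_sub_center_pow_smul hR n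
  simp only [iteratedDeriv_cexp_const_mul, sub_zero, smul_eq_mul, mul_zero, Complex.exp_zero,
    mul_one, one_div] at hcauchy
  simp only [div_eq_inv_mul, hcauchy]
  ring

theorem stmt_1_general (z : ℝ) (ϑ : ℝ) (w : ℝ) (K : ℕ)
    (R : ℝ) (hR : 0 < R)
    (hzero : ∀ ζ : ℂ, ‖ζ‖ = R →
      ζ - Complex.exp (-((Real.exp (-z) : ℂ) * (Complex.exp (I * ϑ) - 1) * z * ζ)) ≠ 0) :
    (∑ k ∈ Finset.range (K + 1),
        ((Real.exp (-z) : ℂ) * (Complex.exp (I * ϑ) - 1)) ^ k * ((w : ℂ) - k * z) ^ k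
          / (Nat.factorial k))
      = (1 / (2 * Real.pi * I)) *
        (∮ ζ in C(0, R),
          (1 - Complex.exp (-((K + 1 : ℕ) * ((Real.exp (-z) : ℂ) * (Complex.exp (I * ϑ) - 1))
                * z * ζ)) / ζ ^ (K + 1))
            * Complex.exp ((Real.exp (-z) : ℂ) * (Complex.exp (I * ϑ) - 1) * w * ζ)
            / (ζ - Complex.exp (-((Real.exp (-z) : ℂ) * (Complex.exp (I * ϑ) - 1) * z * ζ)))) := by
  set μ : ℂ := (Real.exp (-z) : ℂ) * (Complex.exp (I * ϑ) - 1)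
  have hintegrand : Set.EqOn
      (fun ζ => (1 - cexp (-((K + 1 : ℕ) * μ * z * ζ)) / ζ ^ (K + 1)) * cexp (μ * w * ζ)
        / (ζ - cexp (-(μ * z * ζ))))
      (fun ζ => ∑ j ∈ range (K + 1), cexp ((μ * w - j * (μ * z)) * ζ) / ζ ^ (j + 1))
      (Metric.sphere 0 R) := by
    intro ζ hζ
    have hζR : ‖ζ‖ = R := by simpa using hζ
    simpa only [mul_assoc] using one_sub_cexp_div_pow_mul_cexp_div_eq_sum (a := μ * w)
      (b := μ * z) (ne_zero_of_mem_sphere hR.ne' ⟨ζ, hζ⟩) (hzero ζ hζR) (K + 1)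
  rw [circleIntegral.integral_congr hR.le hintegrand, circleIntegral.integral_fun_sum
    fun j _ => circleIntegrable_cexp_mul_div_pow _ hR _, mul_sum]
  refine sum_congr rfl fun k _ => ?_
  rw [circleIntegral_cexp_mul_div_pow _ hR, show μ * w - k * (μ * z) = μ * (w - k * z) by ring,
    mul_pow μ]
  field_simp

/-- contour integral representation of
`∑_{0 ≤ k ≤ K} μ^k (w - kz)^k / k!` over the circle `|ζ| = R`. -/
theorem stmt_1 (z : ℝ) (hz : 0 < z) (ϑ : ℝ) (w : ℝ) (hw : 0 < w) (K : ℕ) (hK : 1 ≤ K)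
    (hKz : w = K * z) (R : ℝ) (hR : 0 < R)
    (hzero : ∀ ζ : ℂ, ‖ζ‖ = R →
      ζ - Complex.exp (-((Real.exp (-z) : ℂ) * (Complex.exp (I * ϑ) - 1) * z * ζ)) ≠ 0) :
    (∑ k ∈ Finset.range (K + 1),
        ((Real.exp (-z) : ℂ) * (Complex.exp (I * ϑ) - 1)) ^ k * ((w : ℂ) - k * z) ^ k
          / (Nat.factorial k))
      = (1 / (2 * Real.pi * I)) *
        (∮ ζ in C(0, R),
          (1 - Complex.exp (-((K + 1 : ℕ) * ((Real.exp (-z) : ℂ) * (Complex.exp (I * ϑ) - 1))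
                * z * ζ)) / ζ ^ (K + 1))
            * Complex.exp ((Real.exp (-z) : ℂ) * (Complex.exp (I * ϑ) - 1) * w * ζ)
            / (ζ - Complex.exp (-((Real.exp (-z) : ℂ) * (Complex.exp (I * ϑ) - 1) * z * ζ)))) :=
  stmt_1_general z ϑ w K R hR hzero
end

section
/- For z > 0, λ = e^{-z}, ϑ real with |ϑ| sufficiently small, and μ = λ(e^{iϑ} - 1), the equation ζ = e^{-μzζ} has a unique solution β with |β| < 1/|ϑ| (for |ϑ| small enough), and β = 1 - μz + O(ϑ²). -/
open Complex Real

/-!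
Write `a = μz`. Since `z e^{-z} ≤ e^{-1} < 1/2` and `|e^{iϑ} - 1| ≤ |ϑ|`, we have `|a| ≤ |ϑ|/2`.
A solution of `ζ = e^{-aζ}` with `|ζ| < 1/|ϑ|` has `|aζ| ≤ 1/2`, hence `|ζ| ≤ e^{1/2} ≤ 2`; on the
disc `|ζ| ≤ 2` the map `ζ ↦ e^{-aζ}` is a `1/2`-contraction, so the Banach fixed point theorem
replaces Rouché's theorem for existence and uniqueness. Finally
`β - (1 - a) = (e^{-aβ} - 1 + aβ) + a(1 - β)`, and both terms are `O(|a|²)`.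
-/

theorem LipschitzOnWith.existsUnique_isFixedPt {α : Type*} [MetricSpace α] {f : α → α}
    {s : Set α} {K : NNReal} (hf : LipschitzOnWith K f s) (hK : K < 1) (hsf : Set.MapsTo f s s)
    (hsc : IsComplete s) {x : α} (hx : x ∈ s) :
    ∃! y, y ∈ s ∧ Function.IsFixedPt f y := by
  obtain ⟨y, hys, hfy, -⟩ :=
    ContractingWith.exists_fixedPoint' hsc hsf ⟨hK, hf.mapsToRestrict hsf⟩ hx (edist_ne_top _ _)
  refine ⟨y, ⟨hys, hfy⟩, fun w ⟨hws, hfw⟩ => ?_⟩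
  have hle : dist w y ≤ K * dist w y := by
    simpa only [hfw.eq, hfy.eq] using hf.dist_le_mul w hws y hys
  have hK' : (K : ℝ) < 1 := hK
  exact dist_le_zero.1 (by nlinarith [dist_nonneg (x := w) (y := y)])

theorem exp_half_le_two : Real.exp (1 / 2) ≤ 2 := by
  have h : Real.exp (1 / 2) ^ 2 = Real.exp 1 := by rw [← Real.exp_nat_mul]; norm_num
  nlinarith [Real.exp_pos (1 / 2), Real.exp_one_lt_d9]

theorem Complex.norm_exp_neg_le_two {w : ℂ} (hw : ‖w‖ ≤ 1 / 2) : ‖exp (-w)‖ ≤ 2 :=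
  calc ‖exp (-w)‖ ≤ Real.exp ‖-w‖ := norm_exp_le_exp_norm _
    _ ≤ Real.exp (1 / 2) := Real.exp_le_exp.2 (by rwa [norm_neg])
    _ ≤ 2 := exp_half_le_two

theorem norm_exp_neg_mul_exp_I_sub_one_mul_le {z : ℝ} (hz : 0 < z) (ϑ : ℝ) :
    ‖(Real.exp (-z) : ℂ) * (exp (I * ϑ) - 1) * z‖ ≤ |ϑ| / 2 := by
  rw [norm_mul, norm_mul, norm_real, norm_real, Real.norm_of_nonneg (Real.exp_pos _).le,
    Real.norm_of_nonneg hz.le]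
  calc _ = z * Real.exp (-z) * ‖exp (I * ϑ) - 1‖ := by ring
    _ ≤ 1 / 2 * |ϑ| :=
        mul_le_mul ((mul_exp_neg_le_exp_neg_one z).trans exp_neg_one_lt_half.le)
          norm_exp_I_mul_ofReal_sub_one_le (norm_nonneg _) (by norm_num)
    _ = |ϑ| / 2 := by ring

section FixedPoint

variable {a : ℂ}

theorem norm_le_two_of_eq_exp_neg_mul {β : ℂ} (hβ : ‖a‖ * ‖β‖ ≤ 1 / 2)
    (hfix : β = exp (-(a * β))) : ‖β‖ ≤ 2 := by
  rw [hfix]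
  exact norm_exp_neg_le_two (by rwa [norm_mul])

theorem mapsTo_exp_neg_mul_closedBall (ha : ‖a‖ ≤ 1 / 4) :
    Set.MapsTo (fun ζ => exp (-(a * ζ))) (Metric.closedBall 0 2) (Metric.closedBall 0 2) := by
  intro ζ hζ
  rw [mem_closedBall_zero_iff] at hζ ⊢
  exact norm_exp_neg_le_two (by rw [norm_mul]; nlinarith [norm_nonneg a])

theorem lipschitzOnWith_exp_neg_mul_closedBall (ha : ‖a‖ ≤ 1 / 8) :
    LipschitzOnWith (1 / 2) (fun ζ => exp (-(a * ζ))) (Metric.closedBall 0 2) := by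
  refine LipschitzOnWith.of_dist_le_mul fun x hx y hy => ?_
  rw [mem_closedBall_zero_iff] at hx hy
  have hxy : ‖x - y‖ ≤ 4 := (norm_sub_le x y).trans (by linarith)
  have hexp : ‖exp (-(a * y))‖ ≤ 2 :=
    norm_exp_neg_le_two (by rw [norm_mul]; nlinarith [norm_nonneg a])
  have hexp_sub : ‖exp (-(a * (x - y))) - 1‖ ≤ 2 * (‖a‖ * ‖x - y‖) := by
    simpa only [norm_neg, norm_mul] using norm_exp_sub_one_le (x := -(a * (x - y)))
      (by rw [norm_neg, norm_mul]; nlinarith [norm_nonneg a, norm_nonneg (x - y)])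
  calc dist (exp (-(a * x))) (exp (-(a * y)))
      = ‖exp (-(a * y))‖ * ‖exp (-(a * (x - y))) - 1‖ := by
        rw [dist_eq_norm, ← norm_mul, mul_sub, ← Complex.exp_add, mul_one]
        ring_nf
    _ ≤ 2 * (2 * (‖a‖ * ‖x - y‖)) := mul_le_mul hexp hexp_sub (norm_nonneg _) zero_le_two
    _ ≤ ((1 / 2 : NNReal) : ℝ) * dist x y := by
        rw [dist_eq_norm]
        push_cast
        nlinarith [norm_nonneg (x - y)]

theorem existsUnique_eq_exp_neg_mul {r : ℝ} (hr : 4 ≤ r) (har : ‖a‖ * r ≤ 1 / 2) :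
    ∃! β : ℂ, ‖β‖ < r ∧ β = exp (-(a * β)) := by
  have ha : ‖a‖ ≤ 1 / 8 := by nlinarith [norm_nonneg a]
  obtain ⟨β, ⟨hβ, hfix⟩, huniq⟩ :=
    (lipschitzOnWith_exp_neg_mul_closedBall ha).existsUnique_isFixedPt (by norm_num)
      (mapsTo_exp_neg_mul_closedBall (by linarith)) Metric.isClosed_closedBall.isComplete
      (Metric.mem_closedBall_self zero_le_two)
  rw [mem_closedBall_zero_iff] at hβ
  refine ⟨β, ⟨by linarith, hfix.symm⟩, fun γ ⟨hγ, hγfix⟩ => huniq γ ⟨?_, hγfix.symm⟩⟩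
  rw [mem_closedBall_zero_iff]
  exact norm_le_two_of_eq_exp_neg_mul (by nlinarith [norm_nonneg a]) hγfix

theorem norm_sub_one_sub_le_of_eq_exp_neg_mul {β : ℂ} (hβ : ‖a‖ * ‖β‖ ≤ 1 / 2)
    (hfix : β = exp (-(a * β))) : ‖β - (1 - a)‖ ≤ 8 * ‖a‖ ^ 2 := by
  have hβ2 := norm_le_two_of_eq_exp_neg_mul hβ hfix
  have haβ : ‖-(a * β)‖ ≤ 1 := by rw [norm_neg, norm_mul]; linarith
  have hquad : ‖exp (-(a * β)) - 1 - -(a * β)‖ ≤ (‖a‖ * ‖β‖) ^ 2 := by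
    simpa only [norm_neg, norm_mul] using norm_exp_sub_one_sub_id_le haβ
  have hlin : ‖1 - β‖ ≤ 2 * (‖a‖ * ‖β‖) := by
    rw [norm_sub_rev]
    nth_rw 1 [hfix]
    simpa only [norm_neg, norm_mul] using norm_exp_sub_one_le haβ
  calc ‖β - (1 - a)‖ = ‖(exp (-(a * β)) - 1 - -(a * β)) + a * (1 - β)‖ := by
        nth_rw 1 [hfix]; ring_nf
    _ ≤ (‖a‖ * ‖β‖) ^ 2 + ‖a‖ * (2 * (‖a‖ * ‖β‖)) := by
        grw [norm_add_le, norm_mul, hquad, hlin]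
    _ ≤ 8 * ‖a‖ ^ 2 := by
        nlinarith [sq_nonneg ‖a‖, norm_nonneg β, mul_nonneg (sq_nonneg ‖a‖) (norm_nonneg β)]

end FixedPoint

/-- for `|ϑ|` small and nonzero, the equation `ζ = e^{-μzζ}` with
`μ = λ(e^{iϑ}-1)` has a unique solution `β` in `|β| < 1/|ϑ|`, and `β = 1 - μz + O(ϑ²)`. -/
theorem stmt_4 (z : ℝ) (hz : 0 < z) :
    ∃ ϑ₀ > 0, ∃ C > 0, ∀ ϑ : ℝ, ϑ ≠ 0 → |ϑ| ≤ ϑ₀ →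
      (∃! β : ℂ, ‖β‖ < 1 / |ϑ| ∧
          β = Complex.exp (-((Real.exp (-z) : ℂ) * (Complex.exp (I * ϑ) - 1) * z * β))) ∧
      ∀ β : ℂ, ‖β‖ < 1 / |ϑ| →
        β = Complex.exp (-((Real.exp (-z) : ℂ) * (Complex.exp (I * ϑ) - 1) * z * β)) →
        ‖β - (1 - (Real.exp (-z) : ℂ) * (Complex.exp (I * ϑ) - 1) * z)‖ ≤ C * ϑ ^ 2 := by
  refine ⟨1 / 4, by norm_num, 2, by norm_num, fun ϑ hϑ hϑ₀ => ?_⟩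
  set a : ℂ := (Real.exp (-z) : ℂ) * (exp (I * ϑ) - 1) * z
  have ha : ‖a‖ ≤ |ϑ| / 2 := norm_exp_neg_mul_exp_I_sub_one_mul_le hz ϑ
  have hϑpos : 0 < |ϑ| := abs_pos.2 hϑ
  have har : ‖a‖ * (1 / |ϑ|) ≤ 1 / 2 := by
    rw [mul_one_div, div_le_iff₀ hϑpos]; linarith
  refine ⟨existsUnique_eq_exp_neg_mul ((le_div_iff₀ hϑpos).2 (by linarith)) har,
    fun β hβ hfix => ?_⟩
  calc ‖β - (1 - a)‖ ≤ 8 * ‖a‖ ^ 2 :=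
        norm_sub_one_sub_le_of_eq_exp_neg_mul (har.trans' (by gcongr)) hfix
    _ ≤ 8 * (|ϑ| / 2) ^ 2 := by gcongr
    _ = 2 * ϑ ^ 2 := by rw [div_pow, sq_abs]; ring
end

section
/- For real α > 0 and real τ, Re{(α + iτ) log(1 + iτ/α)} ≤ ∫_0^{|τ|/α} (αt - |τ|)/(1 + t²) dt, and in particular Re{(α + iτ) log(1 + iτ/α)} ≤ 0. -/
/-!
Writing `y = τ/α`, the real part of `(α + iτ) log(1 + iy)` is `α log(1 + y²)/2 - τ arctan y`,
and `t ↦ α log(1 + t²)/2 - |τ| arctan t` is the primitive of `(αt - |τ|)/(1 + t²)` vanishing at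
`0`; since `τ arctan(τ/α)` is even in `τ`, the inequality is in fact an equality. The integrand is
nonpositive on `[0, |τ|/α]`, whence the sign.
-/

open Complex Real

theorem Complex.arg_eq_arctan_of_re_pos {z : ℂ} (hz : 0 < z.re) :
    arg z = Real.arctan (z.im / z.re) := by
  have h_lt : arg z < π / 2 := arg_lt_pi_div_two_iff.2 (Or.inl hz)
  have h_gt : -(π / 2) < arg z := neg_pi_div_two_lt_arg_iff.2 (Or.inl hz)
  rw [← tan_arg, Real.arctan_tan h_gt h_lt]

theorem re_mul_log_one_add_I_mul_div (α τ : ℝ) :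
    (((α : ℂ) + I * τ) * Complex.log (1 + I * τ / α)).re
      = α * (Real.log (1 + (τ / α) ^ 2) / 2) - τ * Real.arctan (τ / α) := by
  have hz : (1 : ℂ) + I * τ / α = 1 + I * ((τ / α : ℝ) : ℂ) := by push_cast; ring
  have h_re : (1 + I * ((τ / α : ℝ) : ℂ)).re = 1 := by simp
  have h_im : (1 + I * ((τ / α : ℝ) : ℂ)).im = τ / α := by simp
  have h_norm : ‖1 + I * ((τ / α : ℝ) : ℂ)‖ = √(1 + (τ / α) ^ 2) := by
    rw [norm_def, normSq_apply, h_re, h_im]; ring_nf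
  rw [mul_re, hz, log_re, log_im, h_norm, Real.log_sqrt (by positivity),
    arg_eq_arctan_of_re_pos (by rw [h_re]; exact one_pos), h_re, h_im, div_one]
  simp

theorem integral_sub_div_one_add_sq (a c T : ℝ) :
    ∫ t in (0 : ℝ)..T, (a * t - c) / (1 + t ^ 2)
      = a * (Real.log (1 + T ^ 2) / 2) - c * Real.arctan T := by
  have h_deriv : ∀ t ∈ Set.uIcc (0 : ℝ) T, HasDerivAt
      (fun u => a * (Real.log (1 + u ^ 2) / 2) - c * Real.arctan u)
      ((a * t - c) / (1 + t ^ 2)) t := by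
    intro t _
    have h_pos : (0 : ℝ) < 1 + t ^ 2 := by positivity
    have h_log : HasDerivAt (fun u => Real.log (1 + u ^ 2)) (2 * t / (1 + t ^ 2)) t := by
      simpa using ((hasDerivAt_pow 2 t).const_add 1).log h_pos.ne'
    refine (((h_log.div_const 2).const_mul a).sub
      ((Real.hasDerivAt_arctan t).const_mul c)).congr_deriv ?_
    field_simp
  have h_int : IntervalIntegrable (fun t : ℝ => (a * t - c) / (1 + t ^ 2))
      MeasureTheory.volume 0 T :=
    (by fun_prop (disch := intro t; positivity) :
      Continuous fun t : ℝ => (a * t - c) / (1 + t ^ 2)).intervalIntegrable _ _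
  rw [intervalIntegral.integral_eq_sub_of_hasDerivAt h_deriv h_int]
  simp

theorem integral_sub_div_one_add_sq_nonpos {a c T : ℝ} (ha : 0 ≤ a) (hT : 0 ≤ T)
    (h : a * T ≤ c) : ∫ t in (0 : ℝ)..T, (a * t - c) / (1 + t ^ 2) ≤ 0 := by
  have h_nonneg : 0 ≤ ∫ t in (0 : ℝ)..T, (c - a * t) / (1 + t ^ 2) :=
    intervalIntegral.integral_nonneg hT fun t ht =>
      div_nonneg (by nlinarith [ht.2]) (by positivity)
  have h_neg : ∀ t : ℝ, (a * t - c) / (1 + t ^ 2) = -((c - a * t) / (1 + t ^ 2)) :=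
    fun t => by ring
  simp_rw [h_neg, intervalIntegral.integral_neg]
  linarith

theorem mul_arctan_div_eq_abs_mul_arctan_abs_div (τ α : ℝ) :
    τ * Real.arctan (τ / α) = |τ| * Real.arctan (|τ| / α) := by
  rcases abs_cases τ with ⟨h, _⟩ | ⟨h, _⟩
  · rw [h]
  · rw [h, neg_div, Real.arctan_neg, neg_mul_neg]

/-- for `α > 0` and real `τ`,
`Re{(α + iτ) log(1 + iτ/α)} ≤ ∫₀^{|τ|/α} (αt - |τ|)/(1+t²) dt ≤ 0`. -/
theorem stmt_5 (α τ : ℝ) (hα : 0 < α) :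
    (((α : ℂ) + I * τ) * Complex.log (1 + I * τ / α)).re
        ≤ ∫ t in (0 : ℝ)..(|τ| / α), (α * t - |τ|) / (1 + t ^ 2) ∧
      (((α : ℂ) + I * τ) * Complex.log (1 + I * τ / α)).re ≤ 0 := by
  have h_eq : (((α : ℂ) + I * τ) * Complex.log (1 + I * τ / α)).re
      = ∫ t in (0 : ℝ)..(|τ| / α), (α * t - |τ|) / (1 + t ^ 2) := by
    rw [re_mul_log_one_add_I_mul_div, integral_sub_div_one_add_sq, div_pow, div_pow, sq_abs,
      mul_arctan_div_eq_abs_mul_arctan_abs_div]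
  refine ⟨h_eq.le, h_eq ▸ integral_sub_div_one_add_sq_nonpos hα.le (by positivity) ?_⟩
  rw [mul_div_cancel₀ _ hα.ne']
end

section
/- For z > 0, λ = e^{-z}, w > 0 with w/z a positive integer, and real y, define F(ϑ, w) = e^{-iλϑw} ∑_{k ≤ w/z} λ^k (e^{iϑ} - 1)^k (w - kz)^k / k!. Then for |ϑ| ≤ w^{-2}, F(ϑ, w) - e^{-(γ/2)ϑ²w} ≪ |ϑ|, where γ = λ(1 - 2zλ) and the implied constant depends only on z. -/
open Complex Real Finset
open scoped Nat

/-!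
Write `λ = e^{-z}`, `q = e^{iϑ} - 1` and `w = Kz`, so that `|q| ≤ |ϑ|` and `|ϑ| w² ≤ 1`; hence
`λ|ϑ|w ≤ λ/z`, `ϑ²w² ≤ |ϑ|` and `ϑ²w ≤ |ϑ|/z`. The terms `k ≥ 2` of the sum are bounded by
`(λ|ϑ|w)^k / k!`, so the sum is `1 + λq(w - z) + O(λ²ϑ²w²)`. After multiplication by the
unimodular factor `e^{-iλϑw}` the linear terms `-iλϑw` and `iλϑ(w - z)` cancel up to `-iλϑz`, and
every remaining error is quadratic in `ϑw` or of order `ϑ²w`, hence `O(|ϑ|)`. Finally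
`2ze^{-z} ≤ 1` makes `γ ≥ 0`, so `0 ≤ 1 - e^{-γϑ²w/2} ≤ γϑ²w/2 = O(|ϑ|)`.
-/

lemma norm_exp_I_mul_sub_one_sub_le (t : ℝ) : ‖Complex.exp (I * t) - 1 - I * t‖ ≤ 2 * t ^ 2 := by
  have hIt : ‖I * (t : ℂ)‖ = |t| := by simp
  rcases le_or_gt |t| 1 with ht | ht
  · calc _ ≤ ‖I * (t : ℂ)‖ ^ 2 := Complex.norm_exp_sub_one_sub_id_le (hIt ▸ ht)
      _ ≤ 2 * t ^ 2 := by rw [hIt, sq_abs]; nlinarith [sq_nonneg t]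
  · calc _ ≤ ‖Complex.exp (I * t) - 1‖ + ‖I * (t : ℂ)‖ := norm_sub_le _ _
      _ ≤ |t| + |t| := add_le_add Real.norm_exp_I_mul_ofReal_sub_one_le hIt.le
      _ ≤ 2 * t ^ 2 := by nlinarith [sq_abs t]

lemma two_mul_mul_exp_neg_le_one {z : ℝ} (hz : 0 ≤ z) : 2 * z * Real.exp (-z) ≤ 1 := by
  rw [Real.exp_neg, ← div_eq_mul_inv, div_le_one (Real.exp_pos z)]
  nlinarith [Real.quadratic_le_exp_of_nonneg hz]

lemma norm_sum_range_le_sq_mul_exp {x : ℝ} (hx : 0 ≤ x) {n : ℕ} {c : ℕ → ℂ}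
    (hc : ∀ j ∈ range n, ‖c j‖ ≤ x ^ (j + 2) / (j + 2)!) :
    ‖∑ j ∈ range n, c j‖ ≤ x ^ 2 * Real.exp x := by
  have hshift (j : ℕ) : x ^ (j + 2) / (j + 2)! ≤ x ^ 2 * (x ^ j / j !) := by
    calc x ^ (j + 2) / (j + 2)! ≤ x ^ (j + 2) / j ! :=
          div_le_div_of_nonneg_left (by positivity) (by positivity)
            (by exact_mod_cast Nat.factorial_le (by omega))
      _ = x ^ 2 * (x ^ j / j !) := by ring
  calc ‖∑ j ∈ range n, c j‖ ≤ ∑ j ∈ range n, x ^ 2 * (x ^ j / j !) :=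
        (norm_sum_le _ _).trans (sum_le_sum fun j hj => (hc j hj).trans (hshift j))
    _ = x ^ 2 * ∑ j ∈ range n, x ^ j / j ! := (mul_sum _ _ _).symm
    _ ≤ x ^ 2 * Real.exp x := by gcongr; exact Real.sum_le_exp_of_nonneg hx n

lemma norm_pow_mul_pow_mul_sub_pow_div_le {l t z w : ℝ} {q : ℂ} {k : ℕ} (hl : 0 ≤ l)
    (hq : ‖q‖ ≤ t) (hkz : 0 ≤ k * z) (hkw : k * z ≤ w) :
    ‖(l : ℂ) ^ k * q ^ k * ((w : ℂ) - k * z) ^ k / (k ! : ℂ)‖ ≤ (l * t * w) ^ k / k ! := by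
  have hcast : (w : ℂ) - k * z = ((w - k * z : ℝ) : ℂ) := by push_cast; ring
  rw [← mul_pow, ← mul_pow, norm_div, norm_pow, Complex.norm_natCast, norm_mul, norm_mul, hcast,
    Complex.norm_real, Complex.norm_real, Real.norm_of_nonneg hl,
    Real.norm_of_nonneg (by linarith)]
  have ht : 0 ≤ t := (norm_nonneg q).trans hq
  gcongr
  linarith

namespace SmallFrequency

variable {l z w ϑ : ℝ}

lemma abs_mul_le_inv (hz : 0 < z) (hzw : z ≤ w) (hϑ : |ϑ| * w ^ 2 ≤ 1) : |ϑ| * w ≤ z⁻¹ := by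
  have hw : 0 < w := hz.trans_le hzw
  calc |ϑ| * w ≤ w⁻¹ := by rw [← one_div, le_div_iff₀ hw]; linarith
    _ ≤ z⁻¹ := inv_anti₀ hz hzw

lemma sq_mul_sq_le_abs (hϑ : |ϑ| * w ^ 2 ≤ 1) : ϑ ^ 2 * w ^ 2 ≤ |ϑ| := by
  calc ϑ ^ 2 * w ^ 2 = |ϑ| * (|ϑ| * w ^ 2) := by rw [← sq_abs ϑ]; ring
    _ ≤ |ϑ| * 1 := by gcongr
    _ = |ϑ| := mul_one _

lemma sq_mul_le_abs_div (hz : 0 < z) (hzw : z ≤ w) (hϑ : |ϑ| * w ^ 2 ≤ 1) :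
    ϑ ^ 2 * w ≤ |ϑ| / z := by
  calc ϑ ^ 2 * w = |ϑ| * (|ϑ| * w) := by rw [← sq_abs ϑ]; ring
    _ ≤ |ϑ| * z⁻¹ := by gcongr; exact abs_mul_le_inv hz hzw hϑ
    _ = |ϑ| / z := (div_eq_mul_inv _ _).symm

lemma norm_sum_sub_one_sub_le (hl : 0 ≤ l) (hz : 0 < z) {K : ℕ} (hK : 1 ≤ K) (hw : w = K * z)
    (hϑ : |ϑ| * w ^ 2 ≤ 1) :
    ‖(∑ k ∈ range (K + 1),
        (l : ℂ) ^ k * (Complex.exp (I * ϑ) - 1) ^ k * ((w : ℂ) - k * z) ^ k / (k ! : ℂ))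
      - 1 - l * (Complex.exp (I * ϑ) - 1) * (w - z)‖ ≤ l ^ 2 * Real.exp (l / z) * |ϑ| := by
  obtain ⟨n, rfl⟩ : ∃ n, K = n + 1 := ⟨K - 1, by omega⟩
  have hzw : z ≤ w := by rw [hw]; push_cast; nlinarith
  have hw0 : 0 ≤ w := hz.le.trans hzw
  have hx : l * |ϑ| * w ≤ l / z := by
    rw [mul_assoc, div_eq_mul_inv]; gcongr; exact abs_mul_le_inv hz hzw hϑ
  have hx2 : (l * |ϑ| * w) ^ 2 ≤ l ^ 2 * |ϑ| := by
    rw [mul_pow, mul_pow, sq_abs, mul_assoc]; gcongr; exact sq_mul_sq_le_abs hϑ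
  rw [sum_range_succ', sum_range_succ']
  simp only [Nat.cast_zero, Nat.cast_one, zero_add, pow_zero, pow_one, zero_mul, one_mul, mul_one,
    sub_zero, Nat.factorial_zero, Nat.factorial_one, div_one, add_sub_cancel_right]
  calc _ ≤ (l * |ϑ| * w) ^ 2 * Real.exp (l * |ϑ| * w) := by
        refine norm_sum_range_le_sq_mul_exp (by positivity) fun j hj => ?_
        have hjw : ((j + 2 : ℕ) : ℝ) * z ≤ w := by
          have := mem_range.mp hj
          rw [hw]; gcongr ?_ * z; exact_mod_cast (by omega : j + 2 ≤ n + 1)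
        exact_mod_cast norm_pow_mul_pow_mul_sub_pow_div_le hl Real.norm_exp_I_mul_ofReal_sub_one_le
          (by positivity) hjw
    _ ≤ l ^ 2 * |ϑ| * Real.exp (l / z) := by gcongr
    _ = l ^ 2 * Real.exp (l / z) * |ϑ| := by ring

lemma norm_exp_mul_one_add_sub_one_le (hl : 0 ≤ l) (hz : 0 < z) (hzw : z ≤ w)
    (hϑ : |ϑ| * w ^ 2 ≤ 1) :
    ‖Complex.exp (-(I * (l : ℂ) * ϑ * w)) * (1 + l * (Complex.exp (I * ϑ) - 1) * (w - z)) - 1‖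
      ≤ (3 * l ^ 2 + 2 * l / z + l * z) * |ϑ| := by
  set q := Complex.exp (I * ϑ) - 1
  set e := Complex.exp (I * (-(l * ϑ * w) : ℝ))
  have hw : 0 ≤ w := hz.le.trans hzw
  have hsq := sq_mul_sq_le_abs hϑ
  have hsplit : Complex.exp (-(I * (l : ℂ) * ϑ * w)) * (1 + l * q * (w - z)) - 1 =
      (e - 1 - I * (-(l * ϑ * w) : ℝ)) + (e - 1) * ((l * (w - z) : ℝ) * q)
        + (l * (w - z) : ℝ) * (q - I * ϑ) - I * (l * z * ϑ : ℝ) := by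
    simp only [e]; push_cast; ring_nf
  have h1 : ‖e - 1 - I * (-(l * ϑ * w) : ℝ)‖ ≤ 2 * l ^ 2 * |ϑ| := by
    refine (norm_exp_I_mul_sub_one_sub_le _).trans ?_
    calc 2 * (-(l * ϑ * w)) ^ 2 = 2 * l ^ 2 * (ϑ ^ 2 * w ^ 2) := by ring
      _ ≤ 2 * l ^ 2 * |ϑ| := by gcongr
  have hc : ‖((l * (w - z) : ℝ) : ℂ)‖ ≤ l * w := by
    rw [Complex.norm_real, Real.norm_of_nonneg (mul_nonneg hl (by linarith))]
    nlinarith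
  have h2 : ‖(e - 1) * ((l * (w - z) : ℝ) * q)‖ ≤ l ^ 2 * |ϑ| := by
    have he : ‖e - 1‖ ≤ l * |ϑ| * w := by
      refine Real.norm_exp_I_mul_ofReal_sub_one_le.trans_eq ?_
      rw [norm_neg, Real.norm_eq_abs, abs_mul, abs_mul, abs_of_nonneg hl, abs_of_nonneg hw]
    have hq : ‖q‖ ≤ |ϑ| := Real.norm_exp_I_mul_ofReal_sub_one_le
    rw [norm_mul, norm_mul]
    calc _ ≤ (l * |ϑ| * w) * ((l * w) * |ϑ|) := by gcongr
      _ = l ^ 2 * (ϑ ^ 2 * w ^ 2) := by rw [← sq_abs ϑ]; ring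
      _ ≤ l ^ 2 * |ϑ| := by gcongr
  have h3 : ‖((l * (w - z) : ℝ) : ℂ) * (q - I * ϑ)‖ ≤ 2 * l / z * |ϑ| := by
    rw [norm_mul]
    calc _ ≤ (l * w) * (2 * ϑ ^ 2) := by gcongr; exact norm_exp_I_mul_sub_one_sub_le ϑ
      _ = 2 * l * (ϑ ^ 2 * w) := by ring
      _ ≤ 2 * l * (|ϑ| / z) := by gcongr; exact sq_mul_le_abs_div hz hzw hϑ
      _ = 2 * l / z * |ϑ| := by ring
  have h4 : ‖I * ((l * z * ϑ : ℝ) : ℂ)‖ = l * z * |ϑ| := by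
    simp [abs_of_nonneg hl, abs_of_pos hz]
  rw [hsplit]
  calc _ ≤ ‖e - 1 - I * (-(l * ϑ * w) : ℝ)‖ + ‖(e - 1) * ((l * (w - z) : ℝ) * q)‖
        + ‖((l * (w - z) : ℝ) : ℂ) * (q - I * ϑ)‖ + ‖I * ((l * z * ϑ : ℝ) : ℂ)‖ :=
        (norm_sub_le _ _).trans (add_le_add norm_add₃_le le_rfl)
    _ ≤ (3 * l ^ 2 + 2 * l / z + l * z) * |ϑ| := by linarith

lemma norm_one_sub_exp_le {γ : ℝ} (hγ : 0 ≤ γ) (hz : 0 < z) (hzw : z ≤ w)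
    (hϑ : |ϑ| * w ^ 2 ≤ 1) :
    ‖1 - (Real.exp (-(γ / 2) * ϑ ^ 2 * w) : ℂ)‖ ≤ γ / (2 * z) * |ϑ| := by
  set x := -(γ / 2) * ϑ ^ 2 * w
  have hx : x ≤ 0 := by
    have : 0 ≤ γ / 2 * ϑ ^ 2 * w := by have := hz.trans_le hzw; positivity
    simp only [x, neg_mul]
    linarith
  rw [← Complex.ofReal_one, ← Complex.ofReal_sub, Complex.norm_real,
    Real.norm_of_nonneg (sub_nonneg.mpr (Real.exp_le_one_iff.mpr hx))]
  calc 1 - Real.exp x ≤ -x := by linarith [Real.add_one_le_exp x]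
    _ = γ / 2 * (ϑ ^ 2 * w) := by ring
    _ ≤ γ / 2 * (|ϑ| / z) := by gcongr; exact sq_mul_le_abs_div hz hzw hϑ
    _ = γ / (2 * z) * |ϑ| := by ring

end SmallFrequency

/-- estimate (7), `F(ϑ,w) - e^{-(γ/2)ϑ²w} ≪ |ϑ|` for `|ϑ| ≤ w⁻²`. -/
theorem stmt_12 (z : ℝ) (hz : 0 < z) :
    ∃ C > 0, ∀ (K : ℕ), 1 ≤ K → ∀ w ϑ : ℝ, w = K * z → |ϑ| ≤ w ^ (-2 : ℝ) →
      ‖(Complex.exp (-(I * (Real.exp (-z) : ℂ) * ϑ * w)) *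
              (∑ k ∈ Finset.range (K + 1),
                (Real.exp (-z) : ℂ) ^ k * (Complex.exp (I * ϑ) - 1) ^ k
                  * ((w : ℂ) - k * z) ^ k / (Nat.factorial k))
            - (Real.exp (-(Real.exp (-z) * (1 - 2 * z * Real.exp (-z)) / 2) * ϑ ^ 2 * w) : ℂ))‖
        ≤ C * |ϑ| := by
  set l := Real.exp (-z)
  have hl : 0 ≤ l := (Real.exp_pos _).le
  have hγ : 0 ≤ l * (1 - 2 * z * l) :=
    mul_nonneg hl (sub_nonneg.mpr (two_mul_mul_exp_neg_le_one hz.le))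
  refine ⟨l ^ 2 * Real.exp (l / z) + (3 * l ^ 2 + 2 * l / z + l * z)
    + l * (1 - 2 * z * l) / (2 * z), by positivity, ?_⟩
  intro K hK w ϑ hw hϑ
  have hzw : z ≤ w := by rw [hw]; nlinarith [show (1 : ℝ) ≤ K by exact_mod_cast hK]
  have hϑw : |ϑ| * w ^ 2 ≤ 1 := by
    have hw0 : 0 < w := hz.trans_le hzw
    rw [Real.rpow_neg hw0.le, Real.rpow_two] at hϑ
    calc |ϑ| * w ^ 2 ≤ (w ^ 2)⁻¹ * w ^ 2 := by gcongr
      _ = 1 := inv_mul_cancel₀ (by positivity)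
  have hA : ‖Complex.exp (-(I * (l : ℂ) * ϑ * w))‖ = 1 := by
    rw [show -(I * (l : ℂ) * ϑ * w) = I * (-(l * ϑ * w) : ℝ) by push_cast; ring]
    exact Complex.norm_exp_I_mul_ofReal _
  set A := Complex.exp (-(I * (l : ℂ) * ϑ * w))
  set S := ∑ k ∈ range (K + 1),
    (l : ℂ) ^ k * (Complex.exp (I * ϑ) - 1) ^ k * ((w : ℂ) - k * z) ^ k / (k ! : ℂ)
  set G : ℂ := (Real.exp (-(l * (1 - 2 * z * l) / 2) * ϑ ^ 2 * w) : ℂ)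
  set p := (l : ℂ) * (Complex.exp (I * ϑ) - 1) * (w - z)
  calc ‖A * S - G‖ = ‖A * (S - 1 - p) + (A * (1 + p) - 1) + (1 - G)‖ := by ring_nf
    _ ≤ ‖A‖ * ‖S - 1 - p‖ + ‖A * (1 + p) - 1‖ + ‖1 - G‖ := norm_mul A _ ▸ norm_add₃_le
    _ ≤ 1 * (l ^ 2 * Real.exp (l / z) * |ϑ|) + (3 * l ^ 2 + 2 * l / z + l * z) * |ϑ|
          + l * (1 - 2 * z * l) / (2 * z) * |ϑ| := by
        rw [hA]
        gcongr
        exacts [SmallFrequency.norm_sum_sub_one_sub_le hl hz hK hw hϑw,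
          SmallFrequency.norm_exp_mul_one_add_sub_one_le hl hz hzw hϑw,
          SmallFrequency.norm_one_sub_exp_le hγ hz hzw hϑw]
    _ = _ := by ring
end

section
/- For z > 0, λ = e^{-z}, and 0 ≤ ϑ ≤ w^{-1/3} with w ≥ 2 and w/z a positive integer, the function 𝓕(-ϑ, w) = e^{ϑλw} ∑_{k ≤ w/z} λ^k (e^{-ϑ} - 1)^k (w - kz)^k / k! satisfies 𝓕(-ϑ, w) ≪ e^{(λ/2)ϑ²w}, with implied constant depending only on z. -/
/-!
Write `λ = e^{-z}` and `c = λ (1 - e^{-ϑ})`, so that the sum is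
`∑_{k ≤ K} (-c)^k (w - kz)^k / k!`.
Choose `μ ∈ [0, 1/(2z)]` with `μ e^{-μz} = c`. Then `e^{μw}` times the sum is `F_K(w)`, where
`F_j = delaySum z μ j` is, on `[jz, (j+1)z]`, the solution of the delay equation
`F'(w) = μ (F(w) - F(w - z))` that equals `e^{μw}` on `[0, z]`. Comparing `F_{j+1}` with constants
through the integrating factor `e^{-μw}` shows that `F` is nondecreasing and that its increments
`D_j` over `[jz, (j+1)z]` satisfy `0 ≤ D_{j+1} ≤ (e^{μz} - 1) D_j`; hence
`F_K(Kz) ≤ 1 / (2 - e^{μz}) ≤ 3`. Finally `μ ≥ c ≥ λ (ϑ - ϑ²/2)`, so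
`e^{ϑλw} e^{-μw} ≤ e^{(λ/2) ϑ² w}`.
-/

open Real Finset
open scoped Nat

noncomputable def delaySum (z μ : ℝ) (j : ℕ) (w : ℝ) : ℝ :=
  ∑ k ∈ range (j + 1), μ ^ k * (k * z - w) ^ k * exp (μ * (w - k * z)) / k !

noncomputable def delayIncr (z μ : ℝ) (j : ℕ) : ℝ :=
  delaySum z μ j (j * z + z) - delaySum z μ j (j * z)

section DelaySum

variable {z μ : ℝ}

@[simp]
lemma delaySum_zero (w : ℝ) : delaySum z μ 0 w = exp (μ * w) := by
  simp [delaySum]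

lemma hasDerivAt_delaySum_term (k : ℕ) (w : ℝ) :
    HasDerivAt (fun w => μ ^ k * (k * z - w) ^ k * exp (μ * (w - k * z)) / k !)
      (μ * (μ ^ k * (k * z - w) ^ k * exp (μ * (w - k * z)) / k !)
        - k * μ ^ k * (k * z - w) ^ (k - 1) * exp (μ * (w - k * z)) / k !) w := by
  have hpow := ((hasDerivAt_id' w).const_sub ((k : ℝ) * z)).fun_pow k
  have hexp := (((hasDerivAt_id' w).sub_const ((k : ℝ) * z)).const_mul μ).exp
  refine ((((hpow.fun_mul hexp).const_mul (μ ^ k)).div_const (k ! : ℝ)).congr_of_eventuallyEq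
    (.of_forall fun x => by ring)).congr_deriv (by ring)

lemma delaySum_deriv_term_succ (k : ℕ) (w : ℝ) :
    ((k + 1 : ℕ) : ℝ) * μ ^ (k + 1) * ((k + 1 : ℕ) * z - w) ^ k
        * exp (μ * (w - (k + 1 : ℕ) * z)) / (k + 1)!
      = μ * (μ ^ k * (k * z - (w - z)) ^ k * exp (μ * (w - z - k * z)) / k !) := by
  rw [Nat.factorial_succ]
  push_cast
  field_simp
  ring_nf

lemma hasDerivAt_delaySum_succ (j : ℕ) (w : ℝ) :
    HasDerivAt (delaySum z μ (j + 1))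
      (μ * (delaySum z μ (j + 1) w - delaySum z μ j (w - z))) w := by
  have h := HasDerivAt.fun_sum (u := range (j + 2)) fun k _ =>
    hasDerivAt_delaySum_term (z := z) (μ := μ) k w
  refine (h.congr_of_eventuallyEq (.of_forall fun x => by simp [delaySum])).congr_deriv ?_
  have hshift : ∑ k ∈ range (j + 2),
      k * μ ^ k * (k * z - w) ^ (k - 1) * exp (μ * (w - k * z)) / k !
        = μ * delaySum z μ j (w - z) := by
    rw [sum_range_succ', delaySum, mul_sum]
    simp only [Nat.add_sub_cancel, delaySum_deriv_term_succ]
    simp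
  rw [sum_sub_distrib, ← mul_sum, hshift, mul_sub]
  rfl

lemma delaySum_succ_natCast_mul_add (j : ℕ) :
    delaySum z μ (j + 1) (j * z + z) = delaySum z μ j (j * z + z) := by
  rw [delaySum, sum_range_succ, delaySum]
  simp [add_mul]

lemma delaySum_natCast_mul (j : ℕ) :
    delaySum z μ j (j * z) = 1 + ∑ i ∈ range j, delayIncr z μ i := by
  induction j with
  | zero => simp
  | succ j ih =>
    rw [sum_range_succ, ← add_assoc, ← ih, delayIncr, Nat.cast_succ, add_mul, one_mul,
      delaySum_succ_natCast_mul_add]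
    ring

lemma hasDerivAt_exp_neg_mul_delaySum_succ_sub (j : ℕ) (C w : ℝ) :
    HasDerivAt (fun w => exp (-(μ * w)) * (delaySum z μ (j + 1) w - C))
      (exp (-(μ * w)) * (μ * (C - delaySum z μ j (w - z)))) w := by
  have hexp := ((hasDerivAt_id' w).const_mul μ).fun_neg.exp
  refine (hexp.fun_mul ((hasDerivAt_delaySum_succ j w).sub_const C)).congr_deriv ?_
  ring

end DelaySum

lemma monotoneOn_Icc_of_hasDerivAt {f f' : ℝ → ℝ} {a b : ℝ}
    (hf : ∀ x, HasDerivAt f (f' x) x)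
    (hf' : ∀ x ∈ Set.Ioo a b, 0 ≤ f' x) : MonotoneOn f (Set.Icc a b) :=
  monotoneOn_of_hasDerivWithinAt_nonneg (convex_Icc a b)
    (fun x _ => (hf x).continuousAt.continuousWithinAt) (fun x _ => (hf x).hasDerivWithinAt)
    (by simpa only [interior_Icc] using hf')

lemma antitoneOn_Icc_of_hasDerivAt {f f' : ℝ → ℝ} {a b : ℝ}
    (hf : ∀ x, HasDerivAt f (f' x) x)
    (hf' : ∀ x ∈ Set.Ioo a b, f' x ≤ 0) : AntitoneOn f (Set.Icc a b) :=
  antitoneOn_of_hasDerivWithinAt_nonpos (convex_Icc a b)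
    (fun x _ => (hf x).continuousAt.continuousWithinAt) (fun x _ => (hf x).hasDerivWithinAt)
    (by simpa only [interior_Icc] using hf')

section DelayIncr

variable {z μ : ℝ}

lemma delaySum_monotoneOn (hz : 0 ≤ z) (hμ : 0 ≤ μ) (j : ℕ) :
    MonotoneOn (delaySum z μ j) (Set.Icc (j * z) (j * z + z)) := by
  induction j with
  | zero =>
    intro a _ b _ hab
    simpa using exp_le_exp.2 (mul_le_mul_of_nonneg_left hab hμ)
  | succ j ih =>
    set a : ℝ := j * z + z
    rw [Nat.cast_succ, add_mul, one_mul]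
    have hprev : ∀ w ∈ Set.Icc a (a + z),
        delaySum z μ j (w - z) ≤ delaySum z μ (j + 1) a := by
      intro w hw
      rw [delaySum_succ_natCast_mul_add]
      exact ih ⟨by linarith [hw.1], by linarith [hw.2]⟩ (Set.right_mem_Icc.2 (by linarith))
        (by linarith [hw.2])
    have hlow : ∀ w ∈ Set.Icc a (a + z),
        delaySum z μ (j + 1) a ≤ delaySum z μ (j + 1) w := by
      intro w hw
      have hφ := monotoneOn_Icc_of_hasDerivAt
        (hasDerivAt_exp_neg_mul_delaySum_succ_sub j (delaySum z μ (j + 1) a))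
        (fun x hx => mul_nonneg (exp_pos _).le
          (mul_nonneg hμ (sub_nonneg.2 (hprev x (Set.Ioo_subset_Icc_self hx)))))
        (Set.left_mem_Icc.2 (by linarith)) hw hw.1
      dsimp only at hφ
      rw [sub_self, mul_zero] at hφ
      exact sub_nonneg.1 ((mul_nonneg_iff_of_pos_left (exp_pos _)).1 hφ)
    refine monotoneOn_Icc_of_hasDerivAt (hasDerivAt_delaySum_succ j) fun x hx => ?_
    have hx' := Set.Ioo_subset_Icc_self hx
    exact mul_nonneg hμ (sub_nonneg.2 ((hprev x hx').trans (hlow x hx')))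

lemma delayIncr_nonneg (hz : 0 ≤ z) (hμ : 0 ≤ μ) (j : ℕ) : 0 ≤ delayIncr z μ j :=
  sub_nonneg.2 <| delaySum_monotoneOn hz hμ j (Set.left_mem_Icc.2 (by linarith))
    (Set.right_mem_Icc.2 (by linarith)) (by linarith)

lemma delayIncr_zero : delayIncr z μ 0 = exp (μ * z) - 1 := by
  simp [delayIncr]

lemma delayIncr_succ_le (hz : 0 ≤ z) (hμ : 0 ≤ μ) (j : ℕ) :
    delayIncr z μ (j + 1) ≤ (exp (μ * z) - 1) * delayIncr z μ j := by
  set a : ℝ := j * z + z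
  set C := delaySum z μ (j + 1) a - delayIncr z μ j
  have hC : C = delaySum z μ j (j * z) := by
    simp only [C, delayIncr, a, delaySum_succ_natCast_mul_add]
    ring
  have hD : delayIncr z μ (j + 1) = delaySum z μ (j + 1) (a + z) - delaySum z μ (j + 1) a := by
    simp only [delayIncr, a, Nat.cast_succ, add_mul, one_mul]
  have hψ := antitoneOn_Icc_of_hasDerivAt (a := a) (b := a + z)
    (hasDerivAt_exp_neg_mul_delaySum_succ_sub j C)
    (fun x hx => mul_nonpos_of_nonneg_of_nonpos (exp_pos _).le <|
      mul_nonpos_of_nonneg_of_nonpos hμ <| sub_nonpos.2 <| hC.trans_le <|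
        delaySum_monotoneOn hz hμ j (Set.left_mem_Icc.2 (by linarith))
          ⟨by linarith [hx.1], by linarith [hx.2]⟩ (by linarith [hx.1]))
    (Set.left_mem_Icc.2 (by linarith)) (Set.right_mem_Icc.2 (by linarith)) (by linarith)
  simp only at hψ
  rw [show delaySum z μ (j + 1) (a + z) - C = delayIncr z μ (j + 1) + delayIncr z μ j by
      rw [hD]; ring, show delaySum z μ (j + 1) a - C = delayIncr z μ j by ring,
    mul_add μ, neg_add, exp_add, mul_assoc, mul_le_mul_iff_right₀ (exp_pos _), exp_neg,
    inv_mul_le_iff₀ (exp_pos _)] at hψ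
  linarith

lemma delayIncr_le_pow (hz : 0 ≤ z) (hμ : 0 ≤ μ) (j : ℕ) :
    delayIncr z μ j ≤ (exp (μ * z) - 1) ^ (j + 1) := by
  induction j with
  | zero => simp [delayIncr_zero]
  | succ j ih =>
    have hr : 0 ≤ exp (μ * z) - 1 := sub_nonneg.2 (one_le_exp (mul_nonneg hμ hz))
    calc delayIncr z μ (j + 1)
        ≤ (exp (μ * z) - 1) * delayIncr z μ j := delayIncr_succ_le hz hμ j
      _ ≤ (exp (μ * z) - 1) ^ (j + 2) := by rw [pow_succ' _ (j + 1)]; gcongr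

lemma one_le_delaySum_natCast_mul (hz : 0 ≤ z) (hμ : 0 ≤ μ) (j : ℕ) :
    1 ≤ delaySum z μ j (j * z) := by
  rw [delaySum_natCast_mul]
  exact le_add_of_nonneg_right (sum_nonneg fun i _ => delayIncr_nonneg hz hμ i)

lemma delaySum_natCast_mul_le (hz : 0 ≤ z) (hμ : 0 ≤ μ) (h2 : exp (μ * z) < 2) (j : ℕ) :
    delaySum z μ j (j * z) ≤ (2 - exp (μ * z))⁻¹ := by
  set r := exp (μ * z) - 1
  have hr0 : 0 ≤ r := sub_nonneg.2 (one_le_exp (mul_nonneg hμ hz))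
  have hr1 : r < 1 := by simp only [r]; linarith
  calc delaySum z μ j (j * z) ≤ 1 + ∑ i ∈ range j, r ^ (i + 1) := by
        rw [delaySum_natCast_mul]
        gcongr with i
        exact delayIncr_le_pow hz hμ i
    _ = ∑ i ∈ range (j + 1), r ^ i := by rw [sum_range_succ']; ring
    _ ≤ r ^ 0 / (1 - r) := by rw [range_eq_Ico]; exact geom_sum_Ico_le_of_lt_one hr0 hr1
    _ = (2 - exp (μ * z))⁻¹ := by simp only [r]; ring

end DelayIncr

lemma exp_mul_sum_eq_delaySum {z μ b : ℝ} (hb : μ * exp (-(μ * z)) = -b) (j : ℕ) (w : ℝ) :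
    exp (μ * w) * ∑ k ∈ range (j + 1), b ^ k * (w - k * z) ^ k / k ! = delaySum z μ j w := by
  rw [mul_sum, delaySum]
  refine sum_congr rfl fun k _ => ?_
  have hexp : exp (μ * w) * exp (-(μ * z)) ^ k = exp (μ * (w - k * z)) := by
    rw [← exp_nat_mul, ← exp_add]; ring_nf
  have hpow : b ^ k * (w - k * z) ^ k = μ ^ k * (k * z - w) ^ k * exp (-(μ * z)) ^ k := by
    rw [← mul_pow, ← mul_pow, ← mul_pow, neg_eq_iff_eq_neg.1 hb.symm]
    congr 1; ring
  rw [hpow, ← hexp]; ring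

lemma one_sub_exp_neg_ge {x : ℝ} (hx : 0 ≤ x) : x - x ^ 2 / 2 ≤ 1 - exp (-x) := by
  have hq := quadratic_le_exp_of_nonneg hx
  have : exp (-x) ≤ 1 - x + x ^ 2 / 2 := by
    rw [exp_neg, inv_le_iff_one_le_mul₀ (exp_pos x)]
    nlinarith [sq_nonneg (x - 1), sq_nonneg x, sq_nonneg (x ^ 2)]
  linarith

lemma exists_mul_exp_neg_mul_eq {z c r : ℝ} (hz : 0 < z) (hc : 0 ≤ c) (hr : 0 ≤ r)
    (hcr : z * c ≤ r * exp (-r)) :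
    ∃ μ, 0 ≤ μ ∧ μ * z ≤ r ∧ μ * exp (-(μ * z)) = c := by
  obtain ⟨ρ, hρ, hρc⟩ : z * c ∈ (fun ρ => ρ * exp (-ρ)) '' Set.Icc 0 r :=
    intermediate_value_Icc hr (by fun_prop) ⟨by simpa using mul_nonneg hz.le hc, hcr⟩
  refine ⟨ρ / z, div_nonneg hρ.1 hz.le, by rw [div_mul_cancel₀ _ hz.ne']; exact hρ.2, ?_⟩
  rw [div_mul_cancel₀ _ hz.ne', div_mul_eq_mul_div]
  simp only at hρc
  rw [hρc, mul_div_cancel_left₀ _ hz.ne']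

lemma le_four_fifths_of_le_rpow {w ϑ : ℝ} (hw : 2 ≤ w) (hϑ : 0 ≤ ϑ)
    (hϑw : ϑ ≤ w ^ (-(1 : ℝ) / 3)) : ϑ ≤ 4 / 5 := by
  have hcube : ϑ ^ 3 ≤ w⁻¹ :=
    calc ϑ ^ 3 ≤ (w ^ (-(1 : ℝ) / 3)) ^ 3 := by gcongr
      _ = w⁻¹ := by rw [← rpow_natCast, ← rpow_mul (by linarith)]; norm_num [rpow_neg_one]
  have hw' : w⁻¹ ≤ 2⁻¹ := inv_anti₀ (by norm_num) hw
  exact le_of_pow_le_pow_left₀ (n := 3) (by norm_num) (by norm_num) (by linarith)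

lemma exp_one_half_lt_five_thirds : exp (1 / 2) < 5 / 3 := by
  refine lt_of_pow_lt_pow_left₀ 2 (by norm_num) ?_
  rw [← exp_nat_mul]
  norm_num
  linarith [exp_one_lt_d9]

lemma mul_exp_neg_mul_one_sub_exp_neg_le {z ϑ : ℝ} (hϑ : 0 ≤ ϑ) (hϑ' : ϑ ≤ 4 / 5) :
    z * (exp (-z) * (1 - exp (-ϑ))) ≤ 1 / 2 * exp (-(1 / 2)) := by
  have h1 : 1 - exp (-ϑ) ≤ ϑ := by linarith [one_sub_le_exp_neg ϑ]
  have h2 : 0 ≤ 1 - exp (-ϑ) := sub_nonneg.2 (exp_le_one_iff.2 (by linarith))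
  have hhalf : exp (-1) * exp (1 / 2) = exp (-(1 / 2)) := by rw [← exp_add]; norm_num
  have h3 : 8 / 5 ≤ exp (1 / 2) := by
    nlinarith [quadratic_le_exp_of_nonneg (x := 1 / 2) (by norm_num)]
  calc z * (exp (-z) * (1 - exp (-ϑ))) = z * exp (-z) * (1 - exp (-ϑ)) := by ring
    _ ≤ exp (-1) * (4 / 5) := by
        gcongr
        · exact mul_exp_neg_le_exp_neg_one z
        · linarith
    _ ≤ 1 / 2 * exp (-(1 / 2)) := by rw [← hhalf]; nlinarith [exp_pos (-1)]

/-- Laplace transform bound (14) in the negative direction,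
`𝓕(-ϑ, w) = e^{ϑλw} ∑_{k ≤ w/z} λ^k (e^{-ϑ}-1)^k (w-kz)^k/k! ≪ e^{(λ/2)ϑ²w}`. -/
theorem stmt_16 (z : ℝ) (hz : 0 < z) :
    ∃ C > 0, ∀ (K : ℕ), 1 ≤ K → ∀ w ϑ : ℝ, w = K * z → 2 ≤ w →
      0 ≤ ϑ → ϑ ≤ w ^ (-(1 : ℝ)/3) →
      |Real.exp (ϑ * Real.exp (-z) * w) *
          ∑ k ∈ Finset.range (K + 1),
            Real.exp (-z) ^ k * (Real.exp (-ϑ) - 1) ^ k * (w - k * z) ^ k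
              / (Nat.factorial k)|
        ≤ C * Real.exp ((Real.exp (-z) / 2) * ϑ ^ 2 * w) := by
  refine ⟨3, by norm_num, ?_⟩
  rintro K - w ϑ rfl hw hϑ hϑw
  have hϑ' := le_four_fifths_of_le_rpow hw hϑ hϑw
  obtain ⟨μ, hμ, hμz, hμc⟩ := exists_mul_exp_neg_mul_eq hz
    (mul_nonneg (exp_pos _).le (sub_nonneg.2 (exp_le_one_iff.2 (by linarith)))) (by norm_num)
    (mul_exp_neg_mul_one_sub_exp_neg_le hϑ hϑ')
  have hμ_ge : exp (-z) * (ϑ - ϑ ^ 2 / 2) ≤ μ :=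
    calc exp (-z) * (ϑ - ϑ ^ 2 / 2) ≤ exp (-z) * (1 - exp (-ϑ)) :=
          mul_le_mul_of_nonneg_left (one_sub_exp_neg_ge hϑ) (exp_pos _).le
      _ = μ * exp (-(μ * z)) := hμc.symm
      _ ≤ μ := mul_le_of_le_one_right hμ (exp_le_one_iff.2 (by nlinarith))
  have hF0 : 0 ≤ delaySum z μ K (K * z) :=
    zero_le_one.trans (one_le_delaySum_natCast_mul hz.le hμ K)
  have hexp : exp (μ * z) < 5 / 3 :=
    (exp_le_exp.2 hμz).trans_lt exp_one_half_lt_five_thirds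
  have hF : delaySum z μ K (K * z) ≤ 3 :=
    (delaySum_natCast_mul_le hz.le hμ (by linarith) K).trans <| by
      rw [inv_le_comm₀ (by linarith) (by norm_num)]
      linarith
  have hsum := exp_mul_sum_eq_delaySum (b := exp (-z) * (exp (-ϑ) - 1)) (by rw [hμc]; ring) K
    (K * z)
  simp only [mul_pow] at hsum
  rw [show exp (ϑ * exp (-z) * (K * z))
      = exp ((ϑ * exp (-z) - μ) * (K * z)) * exp (μ * (K * z)) by rw [← exp_add]; ring_nf,
    mul_assoc, hsum, abs_mul, abs_exp, abs_of_nonneg hF0, mul_comm 3]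
  have hw0 : 0 ≤ (K : ℝ) * z := by linarith
  gcongr
  nlinarith [mul_le_mul_of_nonneg_right hμ_ge hw0]
end

section
/- Let α > 0, τ real, ν > 0, z > 0, w > 0 with ν(w + αz) = α. For s = α + iτ, H(s) := Γ(s)/{ν(w + sz)}^s satisfies |H(s)| ≪ e^{-α}/√α uniformly in τ with |τ| ≤ w², where the implied constant is absolute (assuming α ≥ 1, νz ≤ 1/2). -/
/-!
Since `ν (w + α z) = α`, the base is `α + i u` with `u = ν z τ`, and
`|(α + i u) ^ s| = α ^ α · exp E(u)` with `E(u) = Re ((α + i τ) log (1 + i u / α))`.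
`E'(u)` has the sign of `u - τ`, so `E` is smallest at `u = τ`.
On the other side, Euler's product bounds `|Γ(α + i τ)|` by `Γ(α) · exp E(τ)`: with
`ψ(y) = Re ((y + i τ) log (1 + i τ / y))` one has `ψ'(y) = log (|y + i τ| / y)`, which decreases,
so `Σ_j log (|α + j + i τ| / (α + j)) ≥ ψ(∞) - ψ(α) = -ψ(α)`.
Hence `|H(s)| ≤ Γ(α) / α ^ α`, and Stirling's bound `Γ(α) ≤ e² α ^ (α - 1/2) e^(-α)`,
obtained from the monotonicity of the Stirling sequence and log-convexity of `Γ`, concludes.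
-/

open Complex Real Filter Topology
open scoped Nat

/-- `Re ((y + τ i) log (1 + u i / y))`, written out for `y > 0`. -/
noncomputable def saddleExponent (y τ u : ℝ) : ℝ :=
  y / 2 * Real.log (1 + (u / y) ^ 2) - τ * Real.arctan (u / y)

lemma Complex.arg_eq_arctan_of_re_pos_s17 {x : ℂ} (hx : 0 < x.re) :
    x.arg = Real.arctan (x.im / x.re) := by
  have h := abs_lt.1 (abs_arg_lt_pi_div_two_iff.2 (Or.inl hx))
  rw [← tan_arg, Real.arctan_tan h.1 h.2]

lemma log_norm_ofReal_add_I_mul {y : ℝ} (hy : 0 < y) (u : ℝ) :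
    Real.log ‖(y : ℂ) + I * u‖ = Real.log y + Real.log (1 + (u / y) ^ 2) / 2 := by
  have h : ‖(y : ℂ) + I * u‖ = y * √(1 + (u / y) ^ 2) := by
    rw [Complex.norm_def, Real.sqrt_eq_iff_mul_self_eq_of_pos (by positivity),
      Complex.normSq_apply]
    have hsq := Real.sq_sqrt (show 0 ≤ 1 + (u / y) ^ 2 by positivity)
    have hy2 : y ^ 2 * (1 + (u / y) ^ 2) = y ^ 2 + u ^ 2 := by field_simp
    simp only [add_re, ofReal_re, mul_re, I_re, I_im, ofReal_im, add_im, mul_im]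
    linear_combination y ^ 2 * hsq + hy2
  rw [h, Real.log_mul hy.ne' (by positivity), Real.log_sqrt (by positivity)]

lemma norm_ofReal_add_I_mul_cpow {y : ℝ} (hy : 0 < y) (τ u : ℝ) :
    ‖((y : ℂ) + I * u) ^ ((y : ℂ) + I * τ)‖ = y ^ y * Real.exp (saddleExponent y τ u) := by
  have hz : (y : ℂ) + I * u ≠ 0 := fun h => by simpa [hy.ne'] using congrArg Complex.re h
  rw [norm_cpow_of_ne_zero hz, Real.rpow_def_of_pos (norm_pos_iff.2 hz),
    Real.rpow_def_of_pos hy, ← Real.exp_add, ← Real.exp_sub, log_norm_ofReal_add_I_mul hy,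
    Complex.arg_eq_arctan_of_re_pos_s17 (by simpa)]
  simp only [saddleExponent, add_re, ofReal_re, mul_re, I_re, zero_mul, I_im, ofReal_im,
    mul_zero, sub_self, add_zero, add_im, mul_im, one_mul, zero_add]
  ring_nf

lemma hasDerivAt_saddleExponent {y : ℝ} (hy : y ≠ 0) (τ u : ℝ) :
    HasDerivAt (saddleExponent y τ) ((u - τ) / y / (1 + (u / y) ^ 2)) u := by
  have hq : HasDerivAt (fun u : ℝ => u / y) (1 / y) u := (hasDerivAt_id u).div_const y
  have hpos : 0 < 1 + (u / y) ^ 2 := by positivity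
  refine ((((hq.fun_pow 2).const_add 1).log hpos.ne').const_mul (y / 2)).fun_sub
    (hq.arctan.const_mul τ) |>.congr_deriv ?_
  norm_num
  field_simp

lemma saddleExponent_self_le {y : ℝ} (hy : 0 < y) (τ u : ℝ) :
    saddleExponent y τ τ ≤ saddleExponent y τ u := by
  have hd := hasDerivAt_saddleExponent hy.ne' τ
  have hsign : ∀ v, 0 ≤ (v - τ) * deriv (saddleExponent y τ) v := fun v => by
    rw [(hd v).deriv, ← mul_div_assoc, ← mul_div_assoc]
    exact div_nonneg (div_nonneg (mul_self_nonneg _) hy.le) (by positivity)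
  have hdiff : ∀ s, DifferentiableOn ℝ (saddleExponent y τ) s :=
    fun _ v _ => (hd v).differentiableAt.differentiableWithinAt
  refine isMinOn_univ_of_deriv (hd τ).continuousAt (hdiff _) (hdiff _) (fun v hv => ?_)
    (fun v hv => ?_) (Set.mem_univ u)
  · exact nonpos_of_mul_nonneg_right (hsign v) (sub_neg.2 hv)
  · exact nonneg_of_mul_nonneg_right (hsign v) (sub_pos.2 hv)

lemma hasDerivAt_saddleExponent_diag (τ : ℝ) {y : ℝ} (hy : y ≠ 0) :
    HasDerivAt (fun y => saddleExponent y τ τ) (Real.log (1 + (τ / y) ^ 2) / 2) y := by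
  have hq : HasDerivAt (fun y : ℝ => τ / y) (-τ / y ^ 2) y :=
    ((hasDerivAt_const y τ).div (hasDerivAt_id y) hy).congr_deriv (by simp)
  have hpos : 0 < 1 + (τ / y) ^ 2 := by positivity
  refine (((hasDerivAt_id y).div_const 2).mul
    (((hq.fun_pow 2).const_add 1).log hpos.ne')).fun_sub (hq.arctan.const_mul τ) |>.congr_deriv ?_
  norm_num
  field_simp
  ring

lemma saddleExponent_diag_add_one_sub_le (τ : ℝ) {y : ℝ} (hy : 0 < y) :
    saddleExponent (y + 1) τ τ - saddleExponent y τ τ ≤ Real.log (1 + (τ / y) ^ 2) / 2 := by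
  have hd : ∀ x ∈ Set.Icc y (y + 1), HasDerivAt (fun y => saddleExponent y τ τ)
      (Real.log (1 + (τ / x) ^ 2) / 2) x := fun x hx =>
    hasDerivAt_saddleExponent_diag τ (hy.trans_le hx.1).ne'
  obtain ⟨ξ, hξ, hslope⟩ := exists_hasDerivAt_eq_slope (fun y => saddleExponent y τ τ) _
    (lt_add_one y) (fun x hx => (hd x hx).continuousAt.continuousWithinAt)
    (fun x hx => hd x (Set.Ioo_subset_Icc_self hx))
  rw [add_sub_cancel_left, div_one] at hslope
  rw [← hslope, div_pow, div_pow]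
  gcongr
  exact hξ.1.le

lemma tendsto_saddleExponent_diag_atTop (τ : ℝ) :
    Tendsto (fun y => saddleExponent y τ τ) atTop (𝓝 0) := by
  have hq : Tendsto (fun y : ℝ => τ / y) atTop (𝓝 0) := tendsto_const_nhds.div_atTop tendsto_id
  have hlog : Tendsto (fun y : ℝ => y / 2 * Real.log (1 + (τ / y) ^ 2)) atTop (𝓝 0) := by
    refine squeeze_zero' ?_ ?_ ((tendsto_const_nhds (x := τ ^ 2 / 2)).div_atTop tendsto_id)
    · filter_upwards [eventually_gt_atTop 0] with y hy
      exact mul_nonneg (by positivity) (Real.log_nonneg (by nlinarith))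
    · filter_upwards [eventually_gt_atTop 0] with y hy
      calc y / 2 * Real.log (1 + (τ / y) ^ 2) ≤ y / 2 * (τ / y) ^ 2 := by
            gcongr
            linarith [Real.log_le_sub_one_of_pos (show 0 < 1 + (τ / y) ^ 2 by positivity)]
        _ = τ ^ 2 / 2 / y := by field_simp
  simpa [saddleExponent] using hlog.sub (((Real.continuous_arctan.tendsto 0).comp hq).const_mul τ)

lemma div_norm_ofReal_add_I_mul_le {y : ℝ} (hy : 0 < y) (τ : ℝ) :
    y / ‖(y : ℂ) + I * τ‖ ≤ Real.exp (saddleExponent y τ τ - saddleExponent (y + 1) τ τ) := by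
  have hz : 0 < ‖(y : ℂ) + I * τ‖ :=
    norm_pos_iff.2 fun h => by simpa [hy.ne'] using congrArg Complex.re h
  rw [← Real.exp_log (div_pos hy hz), Real.log_div hy.ne' hz.ne', log_norm_ofReal_add_I_mul hy]
  exact Real.exp_le_exp.2 (by linarith [saddleExponent_diag_add_one_sub_le τ hy])

lemma norm_GammaSeq_le {α : ℝ} (hα : 0 < α) (τ : ℝ) (n : ℕ) :
    ‖Complex.GammaSeq ((α : ℂ) + I * τ) n‖
      ≤ Real.GammaSeq α n * Real.exp (saddleExponent α τ τ - saddleExponent (α + n + 1) τ τ) := by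
  set ψ : ℝ → ℝ := fun y => saddleExponent y τ τ
  have hprod : ∏ j ∈ Finset.range (n + 1), ((α + j) / ‖(α : ℂ) + I * τ + j‖)
      ≤ Real.exp (ψ α - ψ (α + n + 1)) := by
    calc ∏ j ∈ Finset.range (n + 1), ((α + j) / ‖(α : ℂ) + I * τ + j‖)
        ≤ ∏ j ∈ Finset.range (n + 1), Real.exp (ψ (α + j) - ψ (α + (j + 1 : ℕ))) := by
          refine Finset.prod_le_prod (fun j _ => by positivity) fun j _ => ?_
          have h := div_norm_ofReal_add_I_mul_le (y := α + j) (by positivity) τ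
          push_cast at h ⊢
          rwa [add_right_comm, ← add_assoc]
      _ = Real.exp (ψ α - ψ (α + n + 1)) := by
          rw [← Real.exp_sum, Finset.sum_range_sub' (fun j : ℕ => ψ (α + j))]
          push_cast
          simp only [add_zero, add_assoc]
  have heq : ‖Complex.GammaSeq ((α : ℂ) + I * τ) n‖ = Real.GammaSeq α n
      * ∏ j ∈ Finset.range (n + 1), ((α + j) / ‖(α : ℂ) + I * τ + j‖) := by
    rw [Complex.GammaSeq, Real.GammaSeq, norm_div, norm_mul, norm_prod, Finset.prod_div_distrib,
      norm_natCast_cpow_of_re_ne_zero n (by simpa using hα.ne'), Complex.norm_natCast]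
    have : ∏ j ∈ Finset.range (n + 1), (α + j) ≠ 0 :=
      Finset.prod_ne_zero_iff.2 fun j _ => by positivity
    simp only [add_re, ofReal_re, mul_re, I_re, zero_mul, I_im, ofReal_im, mul_zero, sub_self,
      add_zero]
    field_simp
  rw [heq]
  gcongr
  exact div_nonneg (by positivity) (Finset.prod_nonneg fun j _ => by positivity)

lemma norm_Gamma_le {α : ℝ} (hα : 0 < α) (τ : ℝ) :
    ‖Complex.Gamma ((α : ℂ) + I * τ)‖ ≤ Real.Gamma α * Real.exp (saddleExponent α τ τ) := by
  have hψ : Tendsto (fun n : ℕ => saddleExponent (α + n + 1) τ τ) atTop (𝓝 0) :=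
    (tendsto_saddleExponent_diag_atTop τ).comp <| tendsto_atTop_add_const_right _ _ <|
      tendsto_atTop_add_const_left _ _ tendsto_natCast_atTop_atTop
  have hexp := (hψ.const_sub (saddleExponent α τ τ)).rexp
  rw [sub_zero] at hexp
  refine le_of_tendsto_of_tendsto' (Complex.GammaSeq_tendsto_Gamma _).norm
    ((Real.GammaSeq_tendsto_Gamma α).mul hexp) fun n => ?_
  simpa using norm_GammaSeq_le hα τ n

lemma log_factorial_le {n : ℕ} (hn : n ≠ 0) :
    Real.log n ! ≤ (n + 1 / 2) * Real.log n - n + 1 := by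
  have hmono : Real.log (Stirling.stirlingSeq n) ≤ Real.log (Stirling.stirlingSeq 1) := by
    obtain ⟨m, rfl⟩ := Nat.exists_eq_succ_of_ne_zero hn
    exact Stirling.log_stirlingSeq'_antitone (Nat.zero_le m)
  have hn' : (0 : ℝ) < n := by positivity
  rw [Stirling.log_stirlingSeq_formula, Stirling.log_stirlingSeq_formula,
    Real.log_mul two_ne_zero hn'.ne', Real.log_div hn'.ne' (Real.exp_pos 1).ne', Real.log_exp] at hmono
  norm_num at hmono
  linarith

lemma log_Gamma_natCast_le {n : ℕ} (hn : n ≠ 0) :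
    Real.log (Real.Gamma n) ≤ (n - 1 / 2) * Real.log n - n + 1 := by
  have hn' : (0 : ℝ) < n := by positivity
  have h : Real.log n ! = Real.log (Real.Gamma n) + Real.log n := by
    rw [← Real.Gamma_nat_eq_factorial, Real.Gamma_add_one hn'.ne',
      Real.log_mul hn'.ne' (Real.Gamma_pos_of_pos hn').ne', add_comm]
  linarith [log_factorial_le hn]

lemma log_Gamma_le {α : ℝ} (hα : 1 ≤ α) :
    Real.log (Real.Gamma α) ≤ (α - 1 / 2) * Real.log α - α + 2 := by
  set n := ⌊α⌋₊
  have hn : n ≠ 0 := (Nat.floor_pos.2 hα).ne'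
  have hn' : (0 : ℝ) < n := by positivity
  have hnα : (n : ℝ) ≤ α := Nat.floor_le (by linarith)
  have hαn : α < n + 1 := Nat.lt_floor_add_one α
  have hinterp : Real.log (Real.Gamma α) ≤ Real.log (Real.Gamma n) + (α - n) * Real.log n := by
    rcases hnα.eq_or_lt with h | h
    · simp [← h]
    · have := BohrMollerup.f_add_nat_le convexOn_log_Gamma (fun {y} hy => ?_) hn (sub_pos.2 h)
        (by linarith)
      · simpa using this
      · rw [Function.comp_apply, Real.Gamma_add_one hy.ne',
          Real.log_mul hy.ne' (Real.Gamma_pos_of_pos hy).ne', add_comm, Function.comp_apply]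
  have hlog : (α - 1 / 2) * Real.log n ≤ (α - 1 / 2) * Real.log α := by
    gcongr
    linarith
  linarith [log_Gamma_natCast_le hn]

lemma Gamma_div_rpow_self_le {α : ℝ} (hα : 1 ≤ α) :
    Real.Gamma α / α ^ α ≤ Real.exp 2 * Real.exp (-α) / √α := by
  have hα0 : 0 < α := by linarith
  calc Real.Gamma α / α ^ α = Real.exp (Real.log (Real.Gamma α) - α * Real.log α) := by
        rw [Real.exp_sub, Real.exp_log (Real.Gamma_pos_of_pos hα0), Real.rpow_def_of_pos hα0,
          mul_comm]
    _ ≤ Real.exp (2 + -α - Real.log α / 2) := Real.exp_le_exp.2 (by linarith [log_Gamma_le hα])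
    _ = Real.exp 2 * Real.exp (-α) / √α := by
        rw [Real.exp_sub, Real.exp_add, Real.sqrt_eq_rpow, Real.rpow_def_of_pos hα0]
        ring_nf

/-- saddle-point bound `|H(s)| ≪ e^{-α}/√α` on the line `Re s = α`,
where `H(s) = Γ(s)/{ν(w+sz)}^s` and `ν(w+αz) = α`, uniformly for `|τ| ≤ w²`. -/
theorem stmt_17 :
    ∃ C > 0, ∀ α τ ν z w : ℝ, 1 ≤ α → 0 < ν → 0 < z → 0 < w →
      ν * (w + α * z) = α → ν * z ≤ 1/2 → |τ| ≤ w ^ 2 →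
      ‖(Complex.Gamma ((α : ℂ) + I * τ)
          / ((ν : ℂ) * ((w : ℂ) + ((α : ℂ) + I * τ) * z)) ^ ((α : ℂ) + I * τ))‖
        ≤ C * Real.exp (-α) / Real.sqrt α := by
  refine ⟨Real.exp 2, Real.exp_pos 2, fun α τ ν z w hα _ _ _ hsaddle _ _ => ?_⟩
  have hα0 : 0 < α := by linarith
  have hbase : (ν : ℂ) * ((w : ℂ) + ((α : ℂ) + I * τ) * z) = (α : ℂ) + I * (ν * z * τ : ℝ) := by
    have h : ((ν * (w + α * z) : ℝ) : ℂ) = α := congrArg _ hsaddle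
    push_cast at h ⊢
    linear_combination h
  rw [hbase, norm_div, norm_ofReal_add_I_mul_cpow hα0]
  calc ‖Complex.Gamma ((α : ℂ) + I * τ)‖ / (α ^ α * Real.exp (saddleExponent α τ (ν * z * τ)))
      ≤ Real.Gamma α * Real.exp (saddleExponent α τ τ)
          / (α ^ α * Real.exp (saddleExponent α τ τ)) := by
        gcongr
        · exact norm_Gamma_le hα0 τ
        · exact saddleExponent_self_le hα0 τ _
    _ = Real.Gamma α / α ^ α := mul_div_mul_right _ _ (Real.exp_pos _).ne'
    _ ≤ Real.exp 2 * Real.exp (-α) / √α := Gamma_div_rpow_self_le hα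
end
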